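/- arXiv:1805.03437 — 3 statements merged into one kernel-verified Lean document; each statement's English description precedes it below -/
import Mathlib

section
/- For every set J of jobs with positive processing times, every integer m ≥ 2, and every ℓ ∈ {1,…,m−1}: C*_max(m−ℓ, J) ≤ (1 + ⌈ℓ/(m−ℓ)⌉)·C*_max(m, J), where ⌈·⌉ denotes the ceiling function. -/
open Finset

/-- Completion time (load) of machine `i` under schedule `σ` and processing times `p`. -/
noncomputable def mLoad {n m : ℕ} (p : Fin n → ℝ) (σ : Fin n → Fin m) (i : Fin m) : ℝ :=
  ∑ j ∈ Finset.univ.filter (fun j => σ j = i), p j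

/-- Makespan of schedule `σ`: the maximum machine completion time. -/
noncomputable def makespan {n m : ℕ} (p : Fin n → ℝ) (σ : Fin n → Fin m) : ℝ :=
  ⨆ i, mLoad p σ i

/-- Minimum makespan of the jobs with processing times `p` on `m` machines. -/
noncomputable def optMakespan {n : ℕ} (m : ℕ) (p : Fin n → ℝ) : ℝ :=
  ⨅ σ : Fin n → Fin m, makespan p σ

/-!
Fold the `m` machines onto `d = m - ℓ` machines by `i ↦ i mod d`. Each of the `d` new machines
receives the jobs of at most `⌈m / d⌉ = 1 + ⌈ℓ / d⌉` old machines, so its load is at most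
`1 + ⌈ℓ / d⌉` times the old makespan; applying this to an optimal schedule on `m` machines gives
the bound.
-/

section Schedule

variable {n m d : ℕ}

lemma mLoad_le_makespan (p : Fin n → ℝ) (σ : Fin n → Fin m) (i : Fin m) :
    mLoad p σ i ≤ makespan p σ :=
  le_ciSup (Set.finite_range _).bddAbove i

lemma makespan_nonneg {p : Fin n → ℝ} (hp : ∀ j, 0 ≤ p j) (σ : Fin n → Fin m) :
    0 ≤ makespan p σ :=
  Real.iSup_nonneg fun _ => sum_nonneg fun j _ => hp j

lemma optMakespan_le_makespan (p : Fin n → ℝ) (σ : Fin n → Fin m) :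
    optMakespan m p ≤ makespan p σ :=
  ciInf_le (Set.finite_range _).bddBelow σ

lemma mLoad_comp (p : Fin n → ℝ) (σ : Fin n → Fin m) (g : Fin m → Fin d) (k : Fin d) :
    mLoad p (g ∘ σ) k = ∑ i ∈ univ.filter (fun i => g i = k), mLoad p σ i := by
  simp only [mLoad, sum_fiberwise_eq_sum_filter, Function.comp_apply, mem_filter, mem_univ,
    true_and]

lemma makespan_comp_le {p : Fin n → ℝ} (hp : ∀ j, 0 ≤ p j) (σ : Fin n → Fin m)
    {g : Fin m → Fin d} {c : ℕ} (hg : ∀ k, #(univ.filter fun i => g i = k) ≤ c) :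
    makespan p (g ∘ σ) ≤ c * makespan p σ := by
  have hM := makespan_nonneg hp σ
  refine Real.iSup_le (fun k => ?_) (by positivity)
  calc mLoad p (g ∘ σ) k = ∑ i ∈ univ.filter (fun i => g i = k), mLoad p σ i :=
        mLoad_comp p σ g k
    _ ≤ #(univ.filter fun i => g i = k) * makespan p σ := by
        rw [← nsmul_eq_mul, ← sum_const]
        exact sum_le_sum fun i _ => mLoad_le_makespan p σ i
    _ ≤ c * makespan p σ := by
        gcongr
        exact hg k

lemma optMakespan_le_mul_of_card_fiber_le [NeZero m] {p : Fin n → ℝ} (hp : ∀ j, 0 ≤ p j)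
    {g : Fin m → Fin d} {c : ℕ} (hg : ∀ k, #(univ.filter fun i => g i = k) ≤ c) :
    optMakespan d p ≤ c * optMakespan m p := by
  unfold optMakespan
  rw [Real.mul_iInf_of_nonneg c.cast_nonneg]
  exact le_ciInf fun σ =>
    (optMakespan_le_makespan p (g ∘ σ)).trans (makespan_comp_le hp σ hg)

end Schedule

lemma card_fiber_finOfNat_le {m d : ℕ} [NeZero d] (k : Fin d) :
    #(univ.filter fun i : Fin m => Fin.ofNat d i = k) ≤ ⌈(m : ℝ) / d⌉₊ := by
  have hd : (0 : ℝ) < d := Nat.cast_pos.mpr (Nat.pos_of_neZero d)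
  refine (card_le_card_of_injOn (t := range ⌈(m : ℝ) / d⌉₊) (fun i : Fin m => (i : ℕ) / d)
    (fun i _ => ?_) (fun i hi i' hi' hdiv => ?_)).trans_eq (card_range _)
  · rw [coe_range, Set.mem_Iio, Nat.lt_ceil]
    calc (((i : ℕ) / d : ℕ) : ℝ) ≤ (i : ℝ) / d := Nat.cast_div_le
      _ < m / d := by gcongr; exact_mod_cast i.isLt
  · simp only [coe_filter, mem_univ, true_and, Set.mem_ofPred_eq] at hi hi'
    have hmod : (i : ℕ) % d = (i' : ℕ) % d := by
      rw [← Fin.val_ofNat, ← Fin.val_ofNat d (i' : ℕ), hi, hi']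
    have hquot : (i : ℕ) / d = (i' : ℕ) / d := hdiv
    exact Fin.ext <| by rw [← Nat.div_add_mod i d, ← Nat.div_add_mod i' d, hmod, hquot]

theorem stmt4_general (n m : ℕ) (p : Fin n → ℝ) (hp : ∀ j, 0 < p j)
    (ℓ : ℕ) (hℓ2 : ℓ < m) :
    optMakespan (m - ℓ) p ≤
      (1 + (⌈(ℓ : ℝ) / ((m : ℝ) - ℓ)⌉₊ : ℝ)) * optMakespan m p := by
  have : NeZero m := ⟨by omega⟩
  have : NeZero (m - ℓ) := ⟨by omega⟩
  have hd : (0 : ℝ) < (m : ℝ) - ℓ := sub_pos.mpr (by exact_mod_cast hℓ2)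
  have hceil : ⌈(m : ℝ) / (m - ℓ : ℕ)⌉₊ = 1 + ⌈(ℓ : ℝ) / ((m : ℝ) - ℓ)⌉₊ := by
    rw [Nat.cast_sub hℓ2.le, add_comm, ← Nat.ceil_add_one (div_nonneg ℓ.cast_nonneg hd.le)]
    congr 1
    field_simp
    ring
  calc optMakespan (m - ℓ) p ≤ ⌈(m : ℝ) / (m - ℓ : ℕ)⌉₊ * optMakespan m p :=
        optMakespan_le_mul_of_card_fiber_le (fun j => (hp j).le) card_fiber_finOfNat_le
    _ = _ := by rw [hceil, Nat.cast_add, Nat.cast_one]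

/-- `C*_max(m - ℓ, J) ≤ (1 + ⌈ℓ/(m-ℓ)⌉) · C*_max(m, J)` for `1 ≤ ℓ ≤ m - 1`. -/
theorem stmt4 (n m : ℕ) (hm : 2 ≤ m) (p : Fin n → ℝ) (hp : ∀ j, 0 < p j)
    (ℓ : ℕ) (hℓ1 : 1 ≤ ℓ) (hℓ2 : ℓ < m) :
    optMakespan (m - ℓ) p ≤
      (1 + (⌈(ℓ : ℝ) / ((m : ℝ) - ℓ)⌉₊ : ℝ)) * optMakespan m p :=
  stmt4_general n m p hp ℓ hℓ2
end

section
/- Let m ≥ 2 and let S be a LexOpt schedule of jobs with processing times p_1,…,p_n > 0 on m identical machines. Let p' be obtained from p by decreasing the processing time of one job J_j to p_j − δ for some 0 < δ ≤ p_j (δ = p_j models cancellation of J_j), leaving all other processing times unchanged. Then the schedule that uses exactly the same job-to-machine assignment as S has makespan, measured with processing times p', at most 2·C*_max(m, p'). -/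
open Finset

/-- The completion-time vector sorted in non-increasing order. -/
noncomputable def sortedDesc {m : ℕ} (C : Fin m → ℝ) : Fin m → ℝ :=
  fun i => C (Tuple.sort C i.rev)

/-- A schedule is LexOpt if its non-increasingly sorted completion-time vector is
lexicographically at most that of every other schedule. -/
def IsLexOpt {n m : ℕ} (p : Fin n → ℝ) (σ : Fin n → Fin m) : Prop :=
  ∀ σ' : Fin n → Fin m, toLex (sortedDesc (mLoad p σ)) ≤ toLex (sortedDesc (mLoad p σ'))

section Aux

variable {m : ℕ}

/-- Number of entries of `w` that are `≥ x`. -/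
noncomputable def Ncnt (w : Fin m → ℝ) (x : ℝ) : ℕ :=
  (Finset.univ.filter (fun s => x ≤ w s)).card

lemma mem_iff_lt_Ncnt {w : Fin m → ℝ} (hw : Antitone w) (x : ℝ) (s : Fin m) :
    x ≤ w s ↔ (s : ℕ) < Ncnt w x := by
  constructor
  · intro h
    have hsub : Finset.Iic s ⊆ Finset.univ.filter (fun t => x ≤ w t) := by
      intro t ht
      simp only [Finset.mem_Iic] at ht
      simp only [Finset.mem_filter, Finset.mem_univ, true_and]
      exact h.trans (hw ht)
    have := Finset.card_le_card hsub
    rw [Fin.card_Iic] at this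
    unfold Ncnt
    omega
  · intro h
    by_contra hx
    have hsub : Finset.univ.filter (fun t => x ≤ w t) ⊆ Finset.Iio s := by
      intro t ht
      simp only [Finset.mem_filter, Finset.mem_univ, true_and] at ht
      simp only [Finset.mem_Iio]
      by_contra hts
      push_neg at hts
      exact hx (ht.trans (hw hts))
    have := Finset.card_le_card hsub
    rw [Fin.card_Iio] at this
    unfold Ncnt at h
    omega

lemma lex_lt_of_Ncnt {u v : Fin m → ℝ} (hu : Antitone u) (hv : Antitone v) (y : ℝ)
    (h1 : Ncnt v y < Ncnt u y) (h2 : ∀ z, y < z → Ncnt v z = Ncnt u z) :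
    ¬ (toLex u ≤ toLex v) := by
  have hm : Ncnt u y ≤ m := (Finset.card_filter_le _ _).trans (by simp)
  have hrm : Ncnt v y < m := lt_of_lt_of_le h1 hm
  set r : Fin m := ⟨Ncnt v y, hrm⟩ with hr
  have hur : y ≤ u r := (mem_iff_lt_Ncnt hu y r).2 h1
  have hvr : ¬ y ≤ v r := by
    intro h
    have := (mem_iff_lt_Ncnt hv y r).1 h
    simp [hr] at this
  have hne : v r ≠ u r := fun h => hvr (h ▸ hur)
  set Sd := Finset.univ.filter (fun s : Fin m => v s ≠ u s) with hSddef
  have hrS : r ∈ Sd := by simp [hSddef, hne]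
  have hSd : Sd.Nonempty := ⟨r, hrS⟩
  set r₀ := Sd.min' hSd with hr₀def
  have hr₀ne : v r₀ ≠ u r₀ := by
    have := Sd.min'_mem hSd
    simpa [hSddef] using this
  have hpre : ∀ s, s < r₀ → v s = u s := by
    intro s hs
    by_contra h
    exact absurd (Sd.min'_le s (by simpa [hSddef] using h)) (not_le.2 hs)
  have hlt : v r₀ < u r₀ := by
    rcases lt_or_gt_of_ne hr₀ne with h | h
    · exact h
    · exfalso
      by_cases hy : y < v r₀
      · have hEq := h2 _ hy
        have h3 : (r₀ : ℕ) < Ncnt v (v r₀) := (mem_iff_lt_Ncnt hv _ r₀).1 le_rfl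
        rw [hEq] at h3
        have h4 : v r₀ ≤ u r₀ := (mem_iff_lt_Ncnt hu _ r₀).2 h3
        exact absurd h4 (not_le.2 h)
      · push_neg at hy
        have hr₀r : r₀ ≤ r := Sd.min'_le r hrS
        have : u r ≤ u r₀ := hu hr₀r
        have h5 : u r < y := (this.trans_lt h).trans_le hy
        exact absurd hur (not_le.2 h5)
  intro hle
  rcases lt_or_eq_of_le hle with hlt2 | heq
  · have h1 : ∃ a : Fin m, (∀ s, s < a → u s = v s) ∧ u a < v a := hlt2
    obtain ⟨a, ha1, ha2⟩ := h1
    rcases lt_trichotomy a r₀ with hab | hab | hab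
    · rw [hpre a hab] at ha2
      exact lt_irrefl _ ha2
    · subst hab
      exact lt_irrefl _ (ha2.trans hlt)
    · rw [ha1 r₀ hab] at hlt
      exact lt_irrefl _ hlt
  · have huv : u = v := congrArg ofLex heq
    rw [huv] at hlt
    exact lt_irrefl _ hlt

lemma antitone_sortedDesc (C : Fin m → ℝ) : Antitone (sortedDesc C) := by
  intro a b hab
  exact Tuple.monotone_sort C (Fin.rev_le_rev.mpr hab)

lemma Ncnt_sortedDesc (C : Fin m → ℝ) (x : ℝ) : Ncnt (sortedDesc C) x = Ncnt C x := by
  unfold Ncnt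
  apply Finset.card_bij (fun s _ => Tuple.sort C s.rev)
  · intro s hs
    simp only [Finset.mem_filter, Finset.mem_univ, true_and] at hs ⊢
    exact hs
  · intro a ha b hb hab
    have := congrArg (fun t => ((Tuple.sort C).symm t).rev) hab
    simpa using this
  · intro b hb
    refine ⟨(((Tuple.sort C).symm b).rev), ?_, ?_⟩
    · simp only [Finset.mem_filter, Finset.mem_univ, true_and] at hb ⊢
      show x ≤ C (Tuple.sort C _)
      rw [Fin.rev_rev]
      simpa using hb
    · simp

end Aux

lemma mLoad_update_eq {n m : ℕ} (p : Fin n → ℝ) (σ : Fin n → Fin m) (k : Fin n) (i' : Fin m)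
    (h : i' ≠ σ k) (t : Fin m) :
    mLoad p (Function.update σ k i') t =
      if t = σ k then mLoad p σ t - p k
      else if t = i' then mLoad p σ t + p k
      else mLoad p σ t := by
  unfold mLoad
  by_cases h1 : t = σ k
  · subst h1
    rw [if_pos rfl]
    have hset : Finset.univ.filter (fun s => Function.update σ k i' s = σ k)
        = (Finset.univ.filter (fun s => σ s = σ k)).erase k := by
      ext s
      simp only [Finset.mem_filter, Finset.mem_univ, true_and, Finset.mem_erase]
      by_cases hs : s = k
      · subst hs
        rw [Function.update_self]
        constructor
        · intro hh; exact absurd hh h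
        · rintro ⟨hk, -⟩; exact absurd rfl hk
      · simp [Function.update_of_ne hs, hs]
    rw [hset]
    have hk : k ∈ Finset.univ.filter (fun s => σ s = σ k) := by simp
    have := Finset.sum_erase_add (Finset.univ.filter (fun s => σ s = σ k)) p hk
    linarith
  · rw [if_neg h1]
    by_cases h2 : t = i'
    · rw [if_pos h2, h2]
      have hset : Finset.univ.filter (fun s => Function.update σ k i' s = i')
          = insert k (Finset.univ.filter (fun s => σ s = i')) := by
        ext s
        simp only [Finset.mem_filter, Finset.mem_univ, true_and, Finset.mem_insert]
        by_cases hs : s = k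
        · subst hs; simp [Function.update_self]
        · simp [Function.update_of_ne hs, hs]
      rw [hset]
      have hk : k ∉ Finset.univ.filter (fun s => σ s = i') := by
        simp only [Finset.mem_filter, Finset.mem_univ, true_and]
        exact fun hh => absurd hh.symm h
      rw [Finset.sum_insert hk]
      ring
    · rw [if_neg h2]
      congr 1
      ext s
      simp only [Finset.mem_filter, Finset.mem_univ, true_and]
      by_cases hs : s = k
      · subst hs
        rw [Function.update_self]
        constructor
        · intro hh; exact absurd hh.symm h2
        · intro hh; exact absurd hh.symm h1
      · simp [Function.update_of_ne hs]

lemma lexopt_exchange {n m : ℕ} {p : Fin n → ℝ} {σ : Fin n → Fin m}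
    (hp : ∀ t, 0 < p t) (hσ : IsLexOpt p σ) (k : Fin n) (i' : Fin m) (h : i' ≠ σ k) :
    mLoad p σ (σ k) ≤ mLoad p σ i' + p k := by
  by_contra hcon
  push_neg at hcon
  set C := mLoad p σ with hC
  set σ' := Function.update σ k i' with hσ'def
  set D := mLoad p σ' with hD
  have hDt : ∀ t, D t = if t = σ k then C t - p k else if t = i' then C t + p k else C t :=
    mLoad_update_eq p σ k i' h
  have hfilter_eq : ∀ z, C (σ k) < z →
      Finset.univ.filter (fun t => z ≤ D t) = Finset.univ.filter (fun t => z ≤ C t) := by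
    intro z hz
    ext t
    simp only [Finset.mem_filter, Finset.mem_univ, true_and]
    rw [hDt t]
    by_cases h1 : t = σ k
    · rw [if_pos h1, h1]
      constructor
      · intro hh; exfalso; linarith [hp k]
      · intro hh; exfalso; linarith
    · rw [if_neg h1]
      by_cases h2 : t = i'
      · rw [if_pos h2, h2]
        constructor
        · intro hh; exfalso; linarith
        · intro hh; exfalso; linarith [hp k]
      · rw [if_neg h2]
  have hfilter_y : Finset.univ.filter (fun t => C (σ k) ≤ D t)
      = (Finset.univ.filter (fun t => C (σ k) ≤ C t)).erase (σ k) := by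
    ext t
    simp only [Finset.mem_filter, Finset.mem_univ, true_and, Finset.mem_erase]
    rw [hDt t]
    by_cases h1 : t = σ k
    · rw [if_pos h1, h1]
      constructor
      · intro hh; exfalso; linarith [hp k]
      · rintro ⟨hne, -⟩; exact absurd rfl hne
    · rw [if_neg h1]
      by_cases h2 : t = i'
      · rw [if_pos h2, h2]
        constructor
        · intro hh; exfalso; linarith
        · rintro ⟨-, hh⟩; exfalso; linarith [hp k]
      · rw [if_neg h2]
        exact ⟨fun hh => ⟨h1, hh⟩, fun hh => hh.2⟩
  have hmem : σ k ∈ Finset.univ.filter (fun t => C (σ k) ≤ C t) := by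
    simp only [Finset.mem_filter, Finset.mem_univ, true_and]
    exact le_rfl
  have h1 : Ncnt D (C (σ k)) < Ncnt C (C (σ k)) := by
    unfold Ncnt
    rw [hfilter_y, Finset.card_erase_of_mem hmem]
    exact Nat.sub_lt (Finset.card_pos.2 ⟨σ k, hmem⟩) one_pos
  have h2 : ∀ z, C (σ k) < z → Ncnt D z = Ncnt C z := by
    intro z hz
    unfold Ncnt
    rw [hfilter_eq z hz]
  refine lex_lt_of_Ncnt (antitone_sortedDesc C) (antitone_sortedDesc D) (C (σ k)) ?_ ?_ (hσ σ')
  · rw [Ncnt_sortedDesc, Ncnt_sortedDesc]; exact h1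
  · intro z hz; rw [Ncnt_sortedDesc, Ncnt_sortedDesc]; exact h2 z hz

lemma mLoad_nonneg {n m : ℕ} {p : Fin n → ℝ} (hp : ∀ t, 0 ≤ p t) (σ : Fin n → Fin m) (i : Fin m) :
    0 ≤ mLoad p σ i :=
  Finset.sum_nonneg fun t _ => hp t

lemma sum_mLoad {n m : ℕ} (p : Fin n → ℝ) (σ : Fin n → Fin m) :
    ∑ i, mLoad p σ i = ∑ t, p t :=
  Finset.sum_fiberwise _ _ _

/-- keeping the job-to-machine assignment of a LexOpt schedule after one
processing-time reduction `p_j ← p_j - δ` (cancellation if `δ = p_j`) yields makespan at most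
twice the minimum makespan of the perturbed instance. -/
theorem stmt6 (n m : ℕ) (hm : 2 ≤ m) (p : Fin n → ℝ) (hp : ∀ j, 0 < p j)
    (σ : Fin n → Fin m) (hσ : IsLexOpt p σ)
    (j : Fin n) (δ : ℝ) (hδ1 : 0 < δ) (hδ2 : δ ≤ p j) :
    makespan (Function.update p j (p j - δ)) σ ≤
      2 * optMakespan m (Function.update p j (p j - δ)) := by
  set p' := Function.update p j (p j - δ) with hp'def
  have hM2 : (2:ℝ) ≤ (m:ℝ) := by exact_mod_cast hm
  have hmpos : (0:ℝ) < (m:ℝ) := by linarith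
  have hM1 : (0:ℝ) < (m:ℝ) - 1 := by linarith
  have hM0 : (0:ℝ) ≤ (m:ℝ) - 2 := by linarith
  have hp0 : ∀ t, 0 ≤ p' t := by
    intro t
    by_cases ht : t = j
    · subst ht; rw [hp'def, Function.update_self]; linarith
    · rw [hp'def, Function.update_of_ne ht]; exact (hp t).le
  have hp'j : p' j = p j - δ := by rw [hp'def, Function.update_self]
  have hp'ne : ∀ t, t ≠ j → p' t = p t := fun t ht => by
    rw [hp'def, Function.update_of_ne ht]
  haveI : Nonempty (Fin m) := ⟨⟨0, by omega⟩⟩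
  have hbdd : ∀ (q : Fin n → ℝ) (τ : Fin n → Fin m), BddAbove (Set.range (mLoad q τ)) :=
    fun q τ => Set.Finite.bddAbove (Set.finite_range _)
  have hopt1 : ∀ k : Fin n, p' k ≤ optMakespan m p' := by
    intro k
    apply le_ciInf
    intro τ
    have h1 : p' k ≤ mLoad p' τ (τ k) := by
      unfold mLoad
      apply Finset.single_le_sum (f := p') (fun t _ => hp0 t)
      simp
    exact h1.trans (le_ciSup (hbdd p' τ) (τ k))
  have hopt2 : (∑ t, p' t) ≤ (m:ℝ) * optMakespan m p' := by
    have hdiv : (∑ t, p' t) / (m:ℝ) ≤ optMakespan m p' := by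
      apply le_ciInf
      intro τ
      rw [div_le_iff₀ hmpos]
      rw [← sum_mLoad p' τ]
      calc ∑ i, mLoad p' τ i ≤ ∑ _i : Fin m, makespan p' τ :=
            Finset.sum_le_sum (fun i _ => le_ciSup (hbdd p' τ) i)
        _ = makespan p' τ * (m:ℝ) := by
            simp [Finset.sum_const, Finset.card_univ, mul_comm]
    rw [mul_comm]
    exact (div_le_iff₀ hmpos).1 hdiv
  have hoptnn : 0 ≤ optMakespan m p' := by
    have hs : 0 ≤ ∑ t, p' t := Finset.sum_nonneg fun t _ => hp0 t
    nlinarith [hopt2]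
  set C := mLoad p σ with hCdef
  set C' := mLoad p' σ with hC'def
  have hC' : ∀ i, C' i = C i - (if σ j = i then δ else 0) := by
    intro i
    rw [hC'def, hCdef]
    unfold mLoad
    by_cases hji : σ j = i
    · rw [if_pos hji]
      have hjmem : j ∈ Finset.univ.filter (fun t => σ t = i) := by simp [hji]
      rw [hp'def, Finset.sum_update_of_mem hjmem, Finset.sdiff_singleton_eq_erase]
      have := Finset.sum_erase_add (Finset.univ.filter (fun t => σ t = i)) p hjmem
      linarith
    · rw [if_neg hji, sub_zero]
      apply Finset.sum_congr rfl
      intro t ht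
      simp only [Finset.mem_filter, Finset.mem_univ, true_and] at ht
      exact hp'ne t (fun h => hji (h ▸ ht))
  have htot : ∑ i'', C' i'' = ∑ t, p' t := sum_mLoad p' σ
  show (⨆ i, mLoad p' σ i) ≤ 2 * optMakespan m p'
  apply ciSup_le
  intro i
  show C' i ≤ 2 * optMakespan m p'
  by_cases hij : σ j = i
  · -- machine of job j
    have hC'i : C' i = C i - δ := by rw [hC' i, if_pos hij]
    have hkey : ∀ i'' , i'' ≠ i → C' i - p' j ≤ C' i'' := by
      intro i'' hne
      have hx := lexopt_exchange hp hσ j i'' (by rw [hij]; exact hne)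
      rw [hij] at hx
      have hC'i'' : C' i'' = C i'' := by
        rw [hC' i'', if_neg (fun h => hne (by rw [← h]; exact hij)), sub_zero]
      rw [hC'i, hC'i'', hp'j]
      linarith
    have hsum_erase : ((m:ℝ) - 1) * (C' i - p' j) ≤ ∑ i'' ∈ Finset.univ.erase i, C' i'' := by
      have hcard : (Finset.univ.erase i).card = m - 1 := by
        rw [Finset.card_erase_of_mem (Finset.mem_univ i), Finset.card_univ, Fintype.card_fin]
      have := Finset.card_nsmul_le_sum (Finset.univ.erase i) C' (C' i - p' j)
        (fun i'' hi'' => hkey i'' (Finset.mem_erase.1 hi'').1)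
      rw [hcard, nsmul_eq_mul] at this
      have hcast : ((m - 1 : ℕ) : ℝ) = (m:ℝ) - 1 := by
        push_cast [Nat.cast_sub (by omega : 1 ≤ m)]
        ring
      rw [hcast] at this
      exact this
    have hsplit : ∑ i'', C' i'' = C' i + ∑ i'' ∈ Finset.univ.erase i, C' i'' :=
      (Finset.add_sum_erase _ _ (Finset.mem_univ i)).symm
    have h1 := hopt1 j
    have hp'jnn : 0 ≤ p' j := hp0 j
    nlinarith [hsum_erase, hsplit, htot, hopt2, h1, hp'jnn, hM1, hM2]
  · -- other machine
    have hC'i : C' i = C i := by rw [hC' i, if_neg hij, sub_zero]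
    by_cases hempty : (Finset.univ.filter (fun t => σ t = i)).Nonempty
    · obtain ⟨k, hk⟩ := hempty
      simp only [Finset.mem_filter, Finset.mem_univ, true_and] at hk
      have hkj : k ≠ j := fun h => hij (h ▸ hk)
      have hkey : ∀ i'', i'' ≠ i → C i - p k ≤ C' i'' + (if σ j = i'' then δ else 0) := by
        intro i'' hne
        have hx := lexopt_exchange hp hσ k i'' (by rw [hk]; exact hne)
        rw [hk] at hx
        rw [hC' i'']
        linarith
      have hkey2 : ∀ i'', i'' ≠ i → i'' ≠ σ j → C i - p k ≤ C' i'' := by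
        intro i'' hne hne2
        have := hkey i'' hne
        rw [if_neg (fun h => hne2 h.symm)] at this
        linarith
      have hsjmem : σ j ∈ Finset.univ.erase i := Finset.mem_erase.2 ⟨hij, Finset.mem_univ _⟩
      have hAle : ((m:ℝ) - 2) * (C i - p k) ≤ ∑ i'' ∈ (Finset.univ.erase i).erase (σ j), C' i'' := by
        have hcard : ((Finset.univ.erase i).erase (σ j)).card = m - 2 := by
          rw [Finset.card_erase_of_mem hsjmem, Finset.card_erase_of_mem (Finset.mem_univ i),
            Finset.card_univ, Fintype.card_fin]
          omega
        have := Finset.card_nsmul_le_sum ((Finset.univ.erase i).erase (σ j)) C' (C i - p k)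
          (fun i'' hi'' => hkey2 i'' (Finset.mem_erase.1 (Finset.mem_erase.1 hi'').2).1
            (Finset.mem_erase.1 hi'').1)
        rw [hcard, nsmul_eq_mul] at this
        have hcast : ((m - 2 : ℕ) : ℝ) = (m:ℝ) - 2 := by
          push_cast [Nat.cast_sub hm]
          ring
        rw [hcast] at this
        exact this
      have hsplit : ∑ i'', C' i'' =
          C' i + (C' (σ j) + ∑ i'' ∈ (Finset.univ.erase i).erase (σ j), C' i'') := by
        rw [Finset.add_sum_erase _ _ hsjmem, Finset.add_sum_erase _ _ (Finset.mem_univ i)]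
      have hC'σj : 0 ≤ C' (σ j) := mLoad_nonneg hp0 σ (σ j)
      have hpk : p' k = p k := hp'ne k hkj
      have h1 := hopt1 k
      rw [hpk] at h1
      have hprod : 0 ≤ ((m:ℝ) - 2) * (optMakespan m p' - p k) :=
        mul_nonneg hM0 (by linarith)
      rw [hC'i]
      nlinarith [hAle, hsplit, htot, hopt2, hC'σj, h1, hprod, hM1, hM2]
    · have hfe : Finset.univ.filter (fun t => σ t = i) = ∅ :=
        Finset.not_nonempty_iff_eq_empty.1 hempty
      have : C' i = 0 := by
        rw [hC'def]
        unfold mLoad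
        rw [hfe, Finset.sum_empty]
      rw [this]
      linarith
end

section
/- For every integer m ≥ 2 and every real p > 0 there exist a makespan instance on m machines, a minimum-makespan schedule S_init for it, and a single job cancellation such that the schedule keeping all remaining job-to-machine assignments of S_init has makespan exactly m times the minimum makespan of the perturbed instance. Concretely, the instance with m jobs of processing time p and one job of processing time m·p admits a minimum-makespan schedule placing the m small jobs on machine M_1 and the big job alone on machine M_2; after cancelling the big job, the kept-assignment schedule has makespan m·p while C*_max of the perturbed instance equals p. -/
open Finset

lemma load_le_makespan {n m : ℕ} (p : Fin n → ℝ) (σ : Fin n → Fin m) (i : Fin m) :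
    mLoad p σ i ≤ makespan p σ :=
  le_ciSup (Set.Finite.bddAbove (Set.finite_range _)) i

lemma makespan_le {n m : ℕ} [Nonempty (Fin m)] (p : Fin n → ℝ) (σ : Fin n → Fin m)
    (M : ℝ) (h : ∀ i, mLoad p σ i ≤ M) : makespan p σ ≤ M := ciSup_le h


/-- tightness example. The instance with `m` jobs of length `p` and one job of
length `m·p`, with the minimum-makespan schedule putting the small jobs on `M₁` and the big
job on `M₂`, has the property that cancelling the big job leaves a kept-assignment schedule
of makespan `m·p`, exactly `m` times the minimum makespan `p` of the perturbed instance. -/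
theorem stmt11 (m : ℕ) (hm : 2 ≤ m) (p : ℝ) (hp : 0 < p)
    (P : Fin (m + 1) → ℝ) (hP : ∀ j, P j = if j = Fin.last m then m * p else p)
    (σ : Fin (m + 1) → Fin m)
    (hσ : ∀ j, (σ j : ℕ) = if j = Fin.last m then 1 else 0)
    (P' : Fin (m + 1) → ℝ) (hP' : P' = Function.update P (Fin.last m) 0) :
    makespan P σ = optMakespan m P ∧
      makespan P' σ = m * p ∧
      optMakespan m P' = p ∧
      makespan P' σ = m * optMakespan m P' := by
  have h0m : 0 < m := by omega
  have h1m : 1 < m := by omega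
  haveI : Nonempty (Fin m) := ⟨⟨0, h0m⟩⟩
  set M0 : Fin m := ⟨0, h0m⟩ with hM0
  set M1 : Fin m := ⟨1, h1m⟩ with hM1
  have hσ' : ∀ j, σ j = if j = Fin.last m then M1 else M0 := by
    intro j
    have := hσ j
    split at this <;> simp_all [Fin.ext_iff]
  -- nonnegativity
  have hPnn : ∀ j, 0 ≤ P j := by
    intro j; rw [hP]; split
    · positivity
    · exact hp.le
  have hP'nn : ∀ j, 0 ≤ P' j := by
    intro j; rw [hP']
    rcases eq_or_ne j (Fin.last m) with h | h
    · subst h; simp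
    · rw [Function.update_of_ne h]; exact hPnn j
  have hlast0 : (0 : Fin (m+1)) ≠ Fin.last m := by
    intro h
    have : (0:ℕ) = m := by simpa using congrArg Fin.val h
    omega
  -- the filters under σ
  have hf1 : Finset.univ.filter (fun j => σ j = M1) = {Fin.last m} := by
    ext j
    rcases eq_or_ne j (Fin.last m) with h | h
    · simp [hσ', h]
    · simp only [hσ', if_neg h, hM0, hM1, Finset.mem_filter, Finset.mem_univ, true_and,
        Finset.mem_singleton]
      simp [Fin.ext_iff]
      exact fun hc => h (Fin.ext hc)
  have hf0 : Finset.univ.filter (fun j => σ j = M0) = Finset.univ.erase (Fin.last m) := by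
    ext j
    rcases eq_or_ne j (Fin.last m) with h | h
    · subst h; simp [hσ', hM0, hM1, Fin.ext_iff]
    · simp [hσ', h]
  have hfother : ∀ i : Fin m, i ≠ M0 → i ≠ M1 →
      Finset.univ.filter (fun j => σ j = i) = ∅ := by
    intro i h0 h1
    ext j
    rcases eq_or_ne j (Fin.last m) with h | h <;>
      simp [hσ', h, h0.symm, h1.symm]
  have hcard : (Finset.univ.erase (Fin.last m) : Finset (Fin (m+1))).card = m := by
    rw [Finset.card_erase_of_mem (Finset.mem_univ _)]
    simp
  -- loads under σ for a generic cost Q with Q = c off last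
  have hload0 : ∀ (Q : Fin (m+1) → ℝ), (∀ j, j ≠ Fin.last m → Q j = p) →
      mLoad Q σ M0 = m * p := by
    intro Q hQ
    rw [mLoad, hf0]
    rw [Finset.sum_congr rfl (fun j hj => hQ j (Finset.ne_of_mem_erase hj))]
    rw [Finset.sum_const, hcard, nsmul_eq_mul]
  have hload1 : ∀ (Q : Fin (m+1) → ℝ), mLoad Q σ M1 = Q (Fin.last m) := by
    intro Q; rw [mLoad, hf1, Finset.sum_singleton]
  have hloadother : ∀ (Q : Fin (m+1) → ℝ) (i : Fin m), i ≠ M0 → i ≠ M1 →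
      mLoad Q σ i = 0 := by
    intro Q i h0 h1; rw [mLoad, hfother i h0 h1, Finset.sum_empty]
  have hPoff : ∀ j, j ≠ Fin.last m → P j = p := fun j hj => by rw [hP]; simp [hj]
  have hP'off : ∀ j, j ≠ Fin.last m → P' j = p := fun j hj => by
    rw [hP', Function.update_of_ne hj]; exact hPoff j hj
  have hmp0 : (0:ℝ) ≤ m * p := by positivity
  -- makespan P σ = m*p
  have hmsP : makespan P σ = m * p := by
    apply le_antisymm
    · apply makespan_le
      intro i
      rcases eq_or_ne i M0 with h | h0
      · rw [h, hload0 P hPoff]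
      rcases eq_or_ne i M1 with h | h1
      · rw [h, hload1]; rw [hP]; simp
      · rw [hloadother P i h0 h1]; exact hmp0
    · calc m * p = mLoad P σ M0 := (hload0 P hPoff).symm
        _ ≤ _ := load_le_makespan P σ M0
  -- makespan P' σ = m*p
  have hP'last : P' (Fin.last m) = 0 := by rw [hP']; simp
  have hmsP' : makespan P' σ = m * p := by
    apply le_antisymm
    · apply makespan_le
      intro i
      rcases eq_or_ne i M0 with h | h0
      · rw [h, hload0 P' hP'off]
      rcases eq_or_ne i M1 with h | h1
      · rw [h, hload1, hP'last]; exact hmp0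
      · rw [hloadother P' i h0 h1]; exact hmp0
    · calc m * p = mLoad P' σ M0 := (hload0 P' hP'off).symm
        _ ≤ _ := load_le_makespan P' σ M0
  -- lower bound for any schedule: a job's cost is at most the load of its machine
  have hjob_le : ∀ (Q : Fin (m+1) → ℝ), (∀ j, 0 ≤ Q j) → ∀ (τ : Fin (m+1) → Fin m)
      (j : Fin (m+1)), Q j ≤ makespan Q τ := by
    intro Q hQ τ j
    calc Q j ≤ mLoad Q τ (τ j) := by
          apply Finset.single_le_sum (f := Q) (fun k _ => hQ k)
          simp
      _ ≤ _ := load_le_makespan Q τ (τ j)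
  have hbdd : ∀ (Q : Fin (m+1) → ℝ), (∀ j, 0 ≤ Q j) →
      BddBelow (Set.range fun τ : Fin (m+1) → Fin m => makespan Q τ) := by
    intro Q hQ
    refine ⟨0, ?_⟩
    rintro x ⟨τ, rfl⟩
    exact le_trans (hQ 0) (hjob_le Q hQ τ 0)
  -- optMakespan m P = m*p
  have hoptP : optMakespan m P = m * p := by
    apply le_antisymm
    · calc optMakespan m P ≤ makespan P σ := ciInf_le (hbdd P hPnn) σ
        _ = m * p := hmsP
    · apply le_ciInf
      intro τ
      have := hjob_le P hPnn τ (Fin.last m)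
      rw [hP] at this; simpa using this
  -- optMakespan m P' = p
  have hoptP' : optMakespan m P' = p := by
    apply le_antisymm
    · -- exhibit the spread-out schedule
      have hτ : ∃ τ : Fin (m+1) → Fin m, makespan P' τ ≤ p := by
        refine ⟨fun j => if h : j = Fin.last m then M0 else ⟨j.val, by
          have := j.isLt; have : j.val ≠ m := fun hc => h (Fin.ext hc); omega⟩, ?_⟩
        apply makespan_le
        intro i
        have hcast : (⟨i.val, by omega⟩ : Fin (m+1)) ≠ Fin.last m := by
          simp [Fin.ext_iff]; omega
        have hfilt : Finset.univ.filter (fun j =>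
            (if h : j = Fin.last m then M0 else (⟨j.val, by
              have := j.isLt; have : j.val ≠ m := fun hc => h (Fin.ext hc); omega⟩ : Fin m)) = i)
            ⊆ insert (Fin.last m) {(⟨i.val, by omega⟩ : Fin (m+1))} := by
          intro j hj
          simp only [Finset.mem_filter] at hj
          rcases eq_or_ne j (Fin.last m) with h | h
          · simp [h]
          · rw [dif_neg h] at hj
            have : j.val = i.val := by
              have := hj.2; exact congrArg Fin.val this
            simp [Fin.ext_iff, this]
        calc mLoad P' _ i ≤ ∑ j ∈ insert (Fin.last m) {(⟨i.val, by omega⟩ : Fin (m+1))}, P' j := by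
              apply Finset.sum_le_sum_of_subset_of_nonneg hfilt
              intro j _ _; exact hP'nn j
          _ = P' (Fin.last m) + P' ⟨i.val, by omega⟩ := by
              rw [Finset.sum_insert (by simp [Fin.ext_iff]; omega), Finset.sum_singleton]
          _ = p := by rw [hP'last, hP'off _ hcast]; ring
      obtain ⟨τ, hτ⟩ := hτ
      exact le_trans (ciInf_le (hbdd P' hP'nn) τ) hτ
    · apply le_ciInf
      intro τ
      have := hjob_le P' hP'nn τ 0
      rwa [hP'off 0 hlast0] at this
  exact ⟨hmsP.trans hoptP.symm, hmsP', hoptP', by rw [hmsP', hoptP']⟩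
end
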